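/- arXiv:2605.12459 — 9 statements merged into one kernel-verified Lean document; each statement's English description precedes it below -/
import Mathlib

section
/- If R is a ring and I, J are two-sided ideals of R such that both I and J are trace ideals of right R-modules and I ≅ J as right R-modules, then I = J. -/
/-- The trace ideal of a module `M` over a ring `R`. -/
def traceIdeal (R : Type*) [Ring R] (M : Type*) [AddCommGroup M] [Module R M] : Ideal R :=
  ⨆ f : M →ₗ[R] R, LinearMap.range f

/-- Any `R`-linear map from a trace ideal to `R` has range contained in the trace ideal. -/
lemma traceIdeal_hom_range_le (R : Type*) [Ring R] {M : Type*} [AddCommGroup M] [Module R M]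
    (g : ↥(traceIdeal R M) →ₗ[R] R) : LinearMap.range g ≤ traceIdeal R M := by
  rintro y ⟨⟨x, hx⟩, rfl⟩
  have hx' : x ∈ ⨆ f : M →ₗ[R] R, LinearMap.range f := hx
  have key : ∃ h : x ∈ traceIdeal R M, g ⟨x, h⟩ ∈ traceIdeal R M := by
    refine Submodule.iSup_induction
      (motive := fun x => ∃ h : x ∈ traceIdeal R M, g ⟨x, h⟩ ∈ traceIdeal R M)
      (fun f : M →ₗ[R] R => LinearMap.range f) hx' (fun f x hxf => ?_) ?_
      (fun a b ha hb => ?_)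
    · obtain ⟨m, rfl⟩ := hxf
      have hmem : f m ∈ traceIdeal R M := Submodule.mem_iSup_of_mem f ⟨m, rfl⟩
      refine ⟨hmem, ?_⟩
      set f' : M →ₗ[R] ↥(traceIdeal R M) :=
        f.codRestrict _ (fun m => Submodule.mem_iSup_of_mem f ⟨m, rfl⟩) with hf'
      have h1 : (⟨f m, hmem⟩ : ↥(traceIdeal R M)) = f' m := rfl
      rw [h1]
      exact Submodule.mem_iSup_of_mem (g.comp f') ⟨m, rfl⟩
    · refine ⟨zero_mem _, ?_⟩
      have h0 : (⟨0, zero_mem _⟩ : ↥(traceIdeal R M)) = 0 := rfl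
      rw [h0, map_zero]; exact zero_mem _
    · obtain ⟨ha1, ha2⟩ := ha
      obtain ⟨hb1, hb2⟩ := hb
      refine ⟨add_mem ha1 hb1, ?_⟩
      have h2 : (⟨a + b, add_mem ha1 hb1⟩ : ↥(traceIdeal R M)) = ⟨a, ha1⟩ + ⟨b, hb1⟩ := rfl
      rw [h2, map_add]; exact add_mem ha2 hb2
  obtain ⟨h, hg⟩ := key
  exact hg

/-- If `I` is the trace ideal of `M` and `J` is isomorphic to `I`, then `J ≤ I`. -/
lemma range_le_of_iso (R : Type*) [Ring R]
    (M : Type*) [AddCommGroup M] [Module R M]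
    (I J : Ideal R) (hI : I = traceIdeal R M) (e : ↥I ≃ₗ[R] ↥J) : J ≤ I := by
  subst hI
  have : J = LinearMap.range (J.subtype.comp (e : ↥(traceIdeal R M) →ₗ[R] ↥J)) := by
    rw [LinearMap.range_comp, LinearEquiv.range, Submodule.map_top, Submodule.range_subtype]
  rw [this]
  exact traceIdeal_hom_range_le R _

/-- If `I` and `J` are two-sided ideals that are trace ideals of modules and `I ≅ J`
as `R`-modules, then `I = J`. -/
theorem trace_ideals_isomorphic_eq (R : Type*) [Ring R]
    (M : Type*) [AddCommGroup M] [Module R M]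
    (N : Type*) [AddCommGroup N] [Module R N]
    (I J : Ideal R)
    (hItwosided : ∀ x ∈ I, ∀ r : R, x * r ∈ I)
    (hJtwosided : ∀ x ∈ J, ∀ r : R, x * r ∈ J)
    (hI : I = traceIdeal R M) (hJ : J = traceIdeal R N)
    (e : ↥I ≃ₗ[R] ↥J) : I = J :=
  le_antisymm (range_le_of_iso R N J I hJ e.symm) (range_le_of_iso R M I J hI e)
end

section
/- Let R be a ring, P a projective right R-module, and J a two-sided ideal of R. Then (Tr_R(P) + J)/J = Tr_{R/J}(P/PJ). -/
section Aux

variable {R S : Type*} [Ring R] [Ring S]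
    {P : Type*} [AddCommGroup P] [Module R P]
    {N : Type*} [AddCommGroup N] [Module S N]

/-- Descend a functional `P →ₗ[R] R` to `N →ₗ[S] S`. -/
lemma exists_descent (π : R →+* S) (hπ : Function.Surjective π)
    (p : P →ₛₗ[π] N) (hp : Function.Surjective p)
    (hker : LinearMap.ker p =
      Submodule.span R {x : P | ∃ j ∈ RingHom.ker π, ∃ m : P, x = j • m})
    (f : P →ₗ[R] R) : ∃ g : N →ₗ[S] S, ∀ x, g (p x) = π (f x) := by
  have hspan : ∀ x ∈ Submodule.span R {x : P | ∃ j ∈ RingHom.ker π, ∃ m : P, x = j • m},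
      π (f x) = 0 := by
    intro x hx
    induction hx using Submodule.span_induction with
    | mem y hy =>
      obtain ⟨j, hj, m, rfl⟩ := hy
      rw [map_smul, smul_eq_mul, map_mul, hj, zero_mul]
    | zero => simp
    | add y z _ _ hy hz => rw [map_add, map_add, hy, hz, add_zero]
    | smul r y _ hy => rw [map_smul, smul_eq_mul, map_mul, hy, mul_zero]
  have hφ : ∀ x : P, p x = 0 → π (f x) = 0 := fun x hx =>
    hspan x (hker ▸ LinearMap.mem_ker.2 hx)
  have key : ∀ x y : P, p x = p y → π (f x) = π (f y) := by
    intro x y h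
    have : π (f (x - y)) = 0 := hφ _ (by rw [map_sub, h, sub_self])
    rw [map_sub, map_sub, sub_eq_zero] at this
    exact this
  choose sec hsec using hp
  refine ⟨{ toFun := fun n => π (f (sec n))
            map_add' := ?_
            map_smul' := ?_ }, ?_⟩
  · intro a b
    have h : p (sec (a + b)) = p (sec a + sec b) := by
      rw [map_add, hsec, hsec, hsec]
    show π (f (sec (a + b))) = π (f (sec a)) + π (f (sec b))
    rw [key _ _ h, map_add, map_add]
  · intro s n
    obtain ⟨r, rfl⟩ := hπ s
    have h : p (sec (π r • n)) = p (r • sec n) := by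
      rw [map_smulₛₗ, hsec, hsec]
    show π (f (sec (π r • n))) = _
    rw [key _ _ h, map_smul, smul_eq_mul, map_mul]
    rfl
  · intro x
    exact key _ _ (hsec _)

/-- Lift a functional `N →ₗ[S] S` to `P →ₗ[R] R` using projectivity. -/
lemma exists_lift [Module.Projective R P] (π : R →+* S) (hπ : Function.Surjective π)
    (p : P →ₛₗ[π] N) (g : N →ₗ[S] S) :
    ∃ f : P →ₗ[R] R, ∀ x, π (f x) = g (p x) := by
  obtain ⟨s, hs⟩ := Module.Projective.out (R := R) (P := P)
  choose c hc using fun m : P => hπ (g (p m))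
  refine ⟨(Finsupp.linearCombination R c).comp s, fun x => ?_⟩
  have h1 : π ((Finsupp.linearCombination R c).comp s x) =
      (s x).sum fun m r => π r * π (c m) := by
    simp [Finsupp.linearCombination_apply, map_finsuppSum]
  rw [h1]
  have h2 : (s x).sum (fun m r => π r * π (c m)) = g (p ((s x).sum fun m r => r • m)) := by
    rw [map_finsuppSum, map_finsuppSum]
    refine Finsupp.sum_congr fun m _ => ?_
    rw [map_smulₛₗ, map_smul, hc, smul_eq_mul]
  rw [h2]
  congr 1
  have := hs x
  simpa [Finsupp.linearCombination_apply] using congrArg p this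

end Aux

/-- Let `J` be a two-sided ideal of `R`, realized as the kernel of a surjective ring
homomorphism `π : R → S` (so `S ≅ R/J`), let `P` be a projective `R`-module and let
`p : P → N` be a `π`-semilinear surjection whose kernel is `J•P` (so `N ≅ P/JP`).
Then the image of `Tr_R(P)` in `S` (i.e. `(Tr_R(P) + J)/J`) equals `Tr_{R/J}(P/JP)`. -/
theorem traceIdeal_map_eq_traceIdeal_quotient_of_projective
    (R S : Type*) [Ring R] [Ring S]
    (P : Type*) [AddCommGroup P] [Module R P] [Module.Projective R P]
    (N : Type*) [AddCommGroup N] [Module S N]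
    (π : R →+* S) (hπ : Function.Surjective π)
    (p : P →ₛₗ[π] N) (hp : Function.Surjective p)
    (hker : LinearMap.ker p =
      Submodule.span R {x : P | ∃ j ∈ RingHom.ker π, ∃ m : P, x = j • m}) :
    π '' (traceIdeal R P : Set R) = (traceIdeal S N : Set S) := by
  apply Set.eq_of_subset_of_subset
  · rintro _ ⟨x, hx, rfl⟩
    have hx' : x ∈ traceIdeal R P := hx
    refine Submodule.iSup_induction (motive := fun y => π y ∈ traceIdeal S N)
      (fun f : P →ₗ[R] R => LinearMap.range f) hx' ?_ (by simp) ?_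
    · rintro f _ ⟨z, rfl⟩
      obtain ⟨g, hg⟩ := exists_descent π hπ p hp hker f
      rw [← hg]
      exact Submodule.mem_iSup_of_mem g (LinearMap.mem_range_self g (p z))
    · intro a b ha hb
      rw [map_add]
      exact Submodule.add_mem _ ha hb
  · intro y hy
    have hy' : y ∈ traceIdeal S N := hy
    refine Submodule.iSup_induction (motive := fun z => z ∈ π '' (traceIdeal R P : Set R))
      (fun g : N →ₗ[S] S => LinearMap.range g) hy' ?_ ?_ ?_
    · rintro g _ ⟨n, rfl⟩
      obtain ⟨x, rfl⟩ := hp n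
      obtain ⟨f, hf⟩ := exists_lift π hπ p g
      exact ⟨f x, Submodule.mem_iSup_of_mem f (LinearMap.mem_range_self f x), hf x⟩
    · exact ⟨0, Submodule.zero_mem _, map_zero π⟩
    · rintro _ _ ⟨a, ha, rfl⟩ ⟨b, hb, rfl⟩
      exact ⟨a + b, Submodule.add_mem _ ha hb, map_add π a b⟩
end

section
/- Let S be a ring and s ∈ S. There exists a unit u ∈ S with s² = u·s if and only if there exists t ∈ S with t·s = 0 and s + t a unit. Moreover, in this situation there exists a unit v ∈ S such that t² = t·v. -/
/-- For `s` in a ring `S`: there is a unit `u` with `s² = u·s` iff there is `t` with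
`t·s = 0` and `s + t` a unit; and in that situation there is a unit `v` with `t² = t·v`. -/
theorem exists_unit_sq_eq_iff (S : Type*) [Ring S] (s : S) :
    ((∃ u : Sˣ, s ^ 2 = (u : S) * s) ↔ (∃ t : S, t * s = 0 ∧ IsUnit (s + t))) ∧
      (∀ t : S, t * s = 0 → IsUnit (s + t) → ∃ v : Sˣ, t ^ 2 = t * (v : S)) := by
  constructor
  · constructor
    · rintro ⟨u, hu⟩
      refine ⟨(u : S) - s, by rw [sub_mul, ← hu, sq, sub_self], ?_⟩
      simp [add_sub_cancel, u.isUnit]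
    · rintro ⟨t, ht, hu⟩
      obtain ⟨w, hw⟩ := hu
      exact ⟨w, by rw [sq, hw, add_mul, ht, add_zero]⟩
  · intro t ht hu
    obtain ⟨w, hw⟩ := hu
    exact ⟨w, by rw [sq, hw, mul_add, ht, zero_add]⟩
end

section
/- Let S be a ring, s, u ∈ S with u invertible and s² = u·s. For m ∈ ℤ set s_m = u^{-m}·(u^{-1}·s)·u^m. Then for all integers n > m one has s_n·s_m = s_m and (1 - s_n)·(1 - s_m) = 1 - s_n. -/
/-- For `s² = u·s` with `u` a unit, setting `sₘ = u^{-m}·(u⁻¹·s)·u^m`, one has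
`sₙ·sₘ = sₘ` and `(1 - sₙ)·(1 - sₘ) = 1 - sₙ` for all integers `n > m`. -/
theorem s_m_orthogonality (S : Type*) [Ring S] (s : S) (u : Sˣ)
    (h : s ^ 2 = (u : S) * s) :
    ∀ n m : ℤ, m < n →
      (((u ^ (-n) : Sˣ) : S) * (((u⁻¹ : Sˣ) : S) * s) * ((u ^ n : Sˣ) : S)) *
          (((u ^ (-m) : Sˣ) : S) * (((u⁻¹ : Sˣ) : S) * s) * ((u ^ m : Sˣ) : S)) =
        ((u ^ (-m) : Sˣ) : S) * (((u⁻¹ : Sˣ) : S) * s) * ((u ^ m : Sˣ) : S) ∧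
      (1 - ((u ^ (-n) : Sˣ) : S) * (((u⁻¹ : Sˣ) : S) * s) * ((u ^ n : Sˣ) : S)) *
          (1 - ((u ^ (-m) : Sˣ) : S) * (((u⁻¹ : Sˣ) : S) * s) * ((u ^ m : Sˣ) : S)) =
        1 - ((u ^ (-n) : Sˣ) : S) * (((u⁻¹ : Sˣ) : S) * s) * ((u ^ n : Sˣ) : S) := by
  have hs : s * s = (u : S) * s := by rw [← sq]; exact h
  -- key: s * u^j * s = u^(j+1) * s for natural j
  have key : ∀ j : ℕ, s * ((u : S) ^ j) * s = (u : S) ^ (j + 1) * s := by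
    intro j
    induction j with
    | zero => simpa using hs
    | succ j ih =>
      calc s * (u : S) ^ (j + 1) * s
          = s * (u : S) ^ j * ((u : S) * s) := by
            rw [pow_succ]; simp only [mul_assoc]
        _ = s * (u : S) ^ j * (s * s) := by rw [hs]
        _ = (s * (u : S) ^ j * s) * s := by simp only [mul_assoc]
        _ = (u : S) ^ (j + 1) * (s * s) := by rw [ih]; simp only [mul_assoc]
        _ = (u : S) ^ (j + 1 + 1) * s := by rw [hs]; simp only [pow_succ, mul_assoc]
  set t : S := ((u⁻¹ : Sˣ) : S) * s with ht
  have key2 : ∀ k : ℕ, t * ((u : S) ^ (k + 1)) * t = (u : S) ^ (k + 1) * t := by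
    intro k
    have h1 : ((u : S) ^ (k + 1)) * t = (u : S) ^ k * s := by
      rw [ht, pow_succ, mul_assoc, ← mul_assoc (u : S), Units.mul_inv, one_mul]
    have h2 : ((u⁻¹ : Sˣ) : S) * ((u : S) ^ (k + 1) * s) = (u : S) ^ k * s := by
      rw [pow_succ']
      rw [← mul_assoc, ← mul_assoc, Units.inv_mul, one_mul]
    calc t * ((u : S) ^ (k + 1)) * t
        = ((u⁻¹ : Sˣ) : S) * (s * (u : S) ^ k * s) := by
          rw [mul_assoc t, h1, ht]; simp only [mul_assoc]
      _ = ((u⁻¹ : Sˣ) : S) * ((u : S) ^ (k + 1) * s) := by rw [key k]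
      _ = (u : S) ^ (k + 1) * t := by rw [h2, h1]
  have hc : ∀ a b : ℤ, ((u ^ a : Sˣ) : S) * ((u ^ b : Sˣ) : S) = ((u ^ (a + b) : Sˣ) : S) := by
    intro a b; rw [← Units.val_mul, ← zpow_add]
  have hnat : ∀ k : ℕ, ((u ^ ((k : ℤ) + 1) : Sˣ) : S) = (u : S) ^ (k + 1) := by
    intro k
    have : ((k : ℤ) + 1) = ((k + 1 : ℕ) : ℤ) := by push_cast; ring
    rw [this, zpow_natCast, Units.val_pow_eq_pow_val]
  intro n m hmn
  obtain ⟨k, hk⟩ : ∃ k : ℕ, n = m + ((k : ℤ) + 1) := by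
    refine ⟨(n - m - 1).toNat, ?_⟩
    have : ((n - m - 1).toNat : ℤ) = n - m - 1 := Int.toNat_of_nonneg (by omega)
    omega
  have main :
      (((u ^ (-n) : Sˣ) : S) * t * ((u ^ n : Sˣ) : S)) *
        (((u ^ (-m) : Sˣ) : S) * t * ((u ^ m : Sˣ) : S)) =
      ((u ^ (-m) : Sˣ) : S) * t * ((u ^ m : Sˣ) : S) := by
    have e1 : ((u ^ n : Sˣ) : S) * ((u ^ (-m) : Sˣ) : S) = (u : S) ^ (k + 1) := by
      rw [hc, ← hnat k]; congr 1; congr 1; omega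
    have e2 : ((u ^ (-n) : Sˣ) : S) * ((u ^ ((k : ℤ) + 1) : Sˣ) : S) = ((u ^ (-m) : Sˣ) : S) := by
      rw [hc]; congr 1; congr 1; omega
    calc (((u ^ (-n) : Sˣ) : S) * t * ((u ^ n : Sˣ) : S)) *
        (((u ^ (-m) : Sˣ) : S) * t * ((u ^ m : Sˣ) : S))
        = ((u ^ (-n) : Sˣ) : S) * (t * (((u ^ n : Sˣ) : S) * ((u ^ (-m) : Sˣ) : S)) * t) *
            ((u ^ m : Sˣ) : S) := by simp only [mul_assoc]
      _ = ((u ^ (-n) : Sˣ) : S) * (t * ((u : S) ^ (k + 1)) * t) * ((u ^ m : Sˣ) : S) := by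
          rw [e1]
      _ = ((u ^ (-n) : Sˣ) : S) * ((u : S) ^ (k + 1) * t) * ((u ^ m : Sˣ) : S) := by
          rw [key2 k]
      _ = (((u ^ (-n) : Sˣ) : S) * ((u ^ ((k : ℤ) + 1) : Sˣ) : S)) * t * ((u ^ m : Sˣ) : S) := by
          rw [hnat k]; simp only [mul_assoc]
      _ = ((u ^ (-m) : Sˣ) : S) * t * ((u ^ m : Sˣ) : S) := by rw [e2]
  refine ⟨main, ?_⟩
  rw [sub_mul, one_mul, mul_sub, mul_one, main]
  abel
end

section
/- Let R be a ring and U, V right R-modules with U and V uniserial. If f : U → V is an injective R-homomorphism and g : U → V is a surjective R-homomorphism, then at least one of f, g, f + g is an isomorphism. -/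
/-- If `U`, `V` are uniserial modules, `f : U → V` injective and `g : U → V` surjective,
then at least one of `f`, `g`, `f + g` is an isomorphism. -/
theorem uniserial_mono_epi_sum_iso (R : Type*) [Ring R]
    (U V : Type*) [AddCommGroup U] [Module R U] [AddCommGroup V] [Module R V]
    (hU : ∀ A B : Submodule R U, A ≤ B ∨ B ≤ A)
    (hV : ∀ A B : Submodule R V, A ≤ B ∨ B ≤ A)
    (f g : U →ₗ[R] V) (hf : Function.Injective f) (hg : Function.Surjective g) :
    Function.Bijective f ∨ Function.Bijective g ∨ Function.Bijective (f + g) := by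
  by_cases hgi : Function.Injective g
  · exact Or.inr (Or.inl ⟨hgi, hg⟩)
  by_cases hfs : Function.Surjective f
  · exact Or.inl ⟨hf, hfs⟩
  right; right
  constructor
  · -- injectivity of f + g
    rcases hU (LinearMap.ker (f + g)) (LinearMap.ker g) with h | h
    · intro x y hxy
      have hk : (f + g) (x - y) = 0 := by
        simp [map_sub, hxy]
      have hgk : g (x - y) = 0 := h (LinearMap.mem_ker.mpr hk)
      have hfk : f (x - y) = 0 := by
        have := hk
        simp only [LinearMap.add_apply] at this
        rw [hgk, add_zero] at this
        exact this
      have : x - y = 0 := hf (by simpa using hfk)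
      exact sub_eq_zero.mp this
    · exfalso
      apply hgi
      intro x y hxy
      have hk : g (x - y) = 0 := by simp [map_sub, hxy]
      have hfgk : (f + g) (x - y) = 0 := h (LinearMap.mem_ker.mpr hk)
      have hfk : f (x - y) = 0 := by
        simp only [LinearMap.add_apply] at hfgk
        rw [hk, add_zero] at hfgk
        exact hfgk
      have : x - y = 0 := hf (by simpa using hfk)
      exact sub_eq_zero.mp this
  · -- surjectivity of f + g
    rcases hV (LinearMap.range (f + g)) (LinearMap.range f) with h | h
    · exfalso
      apply hfs
      intro v
      obtain ⟨u, hu⟩ := hg v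
      have h1 : (f + g) u ∈ LinearMap.range f := h (LinearMap.mem_range_self _ u)
      obtain ⟨w, hw⟩ := h1
      refine ⟨w - u, ?_⟩
      have : f w = f u + g u := by simpa [LinearMap.add_apply] using hw
      rw [map_sub, this, hu]
      abel
    · intro v
      obtain ⟨u, hu⟩ := hg v
      have h1 : f u ∈ LinearMap.range (f + g) := h (LinearMap.mem_range_self _ u)
      obtain ⟨w, hw⟩ := h1
      refine ⟨u - w, ?_⟩
      rw [map_sub, hw]
      simp only [LinearMap.add_apply]
      rw [hu]
      abel
end

section
/- Let R be a ring, U a uniserial right R-module, and S = End_R(U). Suppose the sets I = { f ∈ S | f not injective } and K = { f ∈ S | f not surjective } are ideals with I + K = S. If g ∈ S lies in the Jacobson radical of S (equivalently g ∈ I ∩ K) and f ∈ K \ I satisfies Im g ⊆ Im f, then g ∈ f·I, i.e., g = f ∘ h for some non-injective h ∈ S. -/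
/-- Let `U` be a uniserial module with endomorphism ring `S`, and suppose the set `I` of
non-injective endomorphisms and the set `K` of non-surjective endomorphisms are ideals
with `I + K = S`.  If `g ∈ J(S) = I ∩ K` and `f ∈ K \ I` satisfies `Im g ⊆ Im f`, then
`g = f ∘ h` with `h ∈ I`. -/
theorem radical_mem_mul_I_of_range_le (R : Type*) [Ring R]
    (U : Type*) [AddCommGroup U] [Module R U]
    (hU : ∀ A B : Submodule R U, A ≤ B ∨ B ≤ A)
    (hI : ∃ I' : TwoSidedIdeal (Module.End R U),
      ∀ φ : Module.End R U, φ ∈ I' ↔ ¬ Function.Injective φ)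
    (hK : ∃ K' : TwoSidedIdeal (Module.End R U),
      ∀ φ : Module.End R U, φ ∈ K' ↔ ¬ Function.Surjective φ)
    (hIK : ∀ φ : Module.End R U, ∃ i k : Module.End R U,
      ¬ Function.Injective i ∧ ¬ Function.Surjective k ∧ φ = i + k)
    (g f : Module.End R U)
    (hg : ¬ Function.Injective g ∧ ¬ Function.Surjective g)
    (hf : Function.Injective f ∧ ¬ Function.Surjective f)
    (hrange : LinearMap.range g ≤ LinearMap.range f) :
    ∃ h : Module.End R U, ¬ Function.Injective h ∧ g = f * h := by
  let e := LinearEquiv.ofInjective (f : U →ₗ[R] U) hf.1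
  let g' : U →ₗ[R] LinearMap.range (f : U →ₗ[R] U) :=
    (g : U →ₗ[R] U).codRestrict _ (fun x => hrange ⟨x, rfl⟩)
  refine ⟨(e.symm.toLinearMap).comp g', ?_, ?_⟩
  · intro hinj
    exact hg.1 (fun a b hab => by
      have : g' a = g' b := Subtype.ext hab
      have := hinj (by simpa using congrArg e.symm this)
      simpa using this)
  · apply LinearMap.ext
    intro x
    show g x = f (e.symm (g' x))
    have : f (e.symm (g' x)) = (e (e.symm (g' x)) : U) := by
      simp [e, LinearEquiv.ofInjective_apply]
    rw [this, e.apply_symm_apply]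
    rfl
end

section
/- Let R be a ring, U a uniserial right R-module, and S = End_R(U). Suppose I = { f ∈ S | f not injective } and K = { f ∈ S | f not surjective } are ideals with I + K = S. If g ∈ I ∩ K and f ∈ I \ K (f is surjective but not injective) satisfy Ker f ⊆ Ker g, then g ∈ K·f, i.e., g = h ∘ f for some non-surjective h ∈ S. -/
/-- Let `U` be a uniserial module with endomorphism ring `S`, and suppose the set `I` of
non-injective endomorphisms and the set `K` of non-surjective endomorphisms are ideals
with `I + K = S`.  If `g ∈ J(S) = I ∩ K` and `f ∈ I \ K` satisfies `Ker f ⊆ Ker g`, then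
`g = h ∘ f` with `h ∈ K`. -/
theorem radical_mem_K_mul_of_ker_le (R : Type*) [Ring R]
    (U : Type*) [AddCommGroup U] [Module R U]
    (hU : ∀ A B : Submodule R U, A ≤ B ∨ B ≤ A)
    (hI : ∃ I' : TwoSidedIdeal (Module.End R U),
      ∀ φ : Module.End R U, φ ∈ I' ↔ ¬ Function.Injective φ)
    (hK : ∃ K' : TwoSidedIdeal (Module.End R U),
      ∀ φ : Module.End R U, φ ∈ K' ↔ ¬ Function.Surjective φ)
    (hIK : ∀ φ : Module.End R U, ∃ i k : Module.End R U,
      ¬ Function.Injective i ∧ ¬ Function.Surjective k ∧ φ = i + k)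
    (g f : Module.End R U)
    (hg : ¬ Function.Injective g ∧ ¬ Function.Surjective g)
    (hf : Function.Surjective f ∧ ¬ Function.Injective f)
    (hker : LinearMap.ker f ≤ LinearMap.ker g) :
    ∃ h : Module.End R U, ¬ Function.Surjective h ∧ g = h * f := by
  let e := f.quotKerEquivOfSurjective hf.1
  let gbar := (LinearMap.ker f).liftQ g hker
  refine ⟨gbar ∘ₗ (e.symm : U →ₗ[R] U ⧸ LinearMap.ker f), ?_, ?_⟩
  · intro hsurj
    exact hg.2 (by
      have : Function.Surjective ((gbar ∘ₗ (e.symm : U →ₗ[R] U ⧸ LinearMap.ker f)) ∘ₗ f) :=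
        hsurj.comp hf.1
      have heq : (gbar ∘ₗ (e.symm : U →ₗ[R] U ⧸ LinearMap.ker f)) ∘ₗ f = g := by
        ext x
        have : e.symm (f x) = Submodule.Quotient.mk x := by
          apply e.injective; simp [e, LinearMap.quotKerEquivOfSurjective]
        simp [this, gbar]
      rwa [heq] at this)
  · ext x
    have : e.symm (f x) = Submodule.Quotient.mk x := by
      apply e.injective; simp [e, LinearMap.quotKerEquivOfSurjective]
    simp [Module.End.mul_apply, this, gbar]
end

section
/- Let R be a valuation domain inside a division ring D (for every nonzero d ∈ D, either d ∈ R or d⁻¹ ∈ R), and fix 0 ≠ r ∈ R. Set S' = R ∩ rRr⁻¹. If H is a left S'-submodule of R and h₁, h₂ ∈ H, then there exists h ∈ H with h₁, h₂ ∈ S'·h. -/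
private theorem val_key (D : Type*) [DivisionRing D] (R : Subring D)
    (hval : ∀ d : D, d ≠ 0 → d ∈ R ∨ d⁻¹ ∈ R)
    (x : D) (hx0 : x ≠ 0) (hx1 : 1 + x ≠ 0) (hxi : x⁻¹ ∉ R) :
    (1 + x)⁻¹ ∈ R ∧ x * (1 + x)⁻¹ ∈ R := by
  have hf0 : x * (1 + x)⁻¹ ≠ 0 := mul_ne_zero hx0 (inv_ne_zero hx1)
  have hfi : (x * (1 + x)⁻¹)⁻¹ = x⁻¹ + 1 := by
    rw [mul_inv_rev, inv_inv, add_mul, one_mul, mul_inv_cancel₀ hx0]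
  have hninv : (x * (1 + x)⁻¹)⁻¹ ∉ R := by
    rw [hfi]; intro h
    exact hxi (by simpa using R.sub_mem h R.one_mem)
  have hf : x * (1 + x)⁻¹ ∈ R := (hval _ hf0).resolve_right hninv
  have h1 : (1 + x)⁻¹ = 1 - x * (1 + x)⁻¹ := by
    have h2 : (1 + x) * (1 + x)⁻¹ = 1 := mul_inv_cancel₀ hx1
    rw [add_mul, one_mul] at h2
    exact eq_sub_of_add_eq h2
  exact ⟨h1 ▸ R.sub_mem R.one_mem hf, hf⟩

private theorem val_aux (D : Type*) [DivisionRing D] (R : Subring D)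
    (hval : ∀ d : D, d ≠ 0 → d ∈ R ∨ d⁻¹ ∈ R)
    (r : D) (hr0 : r ≠ 0)
    (H : Set D) (hHadd : ∀ x ∈ H, ∀ y ∈ H, x + y ∈ H)
    (h₁ h₂ : D) (hh₁ : h₁ ∈ H) (hh₂ : h₂ ∈ H)
    (d : D) (hd0 : d ≠ 0) (hd1 : 1 + d ≠ 0)
    (hdinv : d⁻¹ ∉ R) (hd'n : r⁻¹ * d * r ∉ R)
    (hde : h₁ = d * h₂) :
    ∃ h ∈ H, (∃ s₁ : D, s₁ ∈ R ∧ r⁻¹ * s₁ * r ∈ R ∧ h₁ = s₁ * h) ∧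
      (∃ s₂ : D, s₂ ∈ R ∧ r⁻¹ * s₂ * r ∈ R ∧ h₂ = s₂ * h) := by
  set d' : D := r⁻¹ * d * r with hd'def
  have hd'0 : d' ≠ 0 := by
    simp only [hd'def]
    exact mul_ne_zero (mul_ne_zero (inv_ne_zero hr0) hd0) hr0
  -- conjugation identity: r⁻¹ * (1+d) * r = 1 + d'
  have hconj : r⁻¹ * (1 + d) * r = 1 + d' := by
    rw [mul_add, mul_one, add_mul, inv_mul_cancel₀ hr0, hd'def]
  have hd'1 : 1 + d' ≠ 0 := by
    rw [← hconj]
    exact mul_ne_zero (mul_ne_zero (inv_ne_zero hr0) hd1) hr0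
  have hback : d = r * d' * r⁻¹ := by
    rw [hd'def, ← mul_assoc, ← mul_assoc, mul_inv_cancel₀ hr0, one_mul,
      mul_assoc, mul_inv_cancel₀ hr0, mul_one]
  have hd'inv1 : 1 + d'⁻¹ ≠ 0 := by
    intro h
    have hdn1 : d'⁻¹ = -1 := eq_neg_of_add_eq_zero_right h
    have hd'n1 : d' = -1 := inv_injective (by rw [hdn1, inv_neg, inv_one])
    have hd1' : d = -1 := by
      rw [hback, hd'n1, mul_neg, mul_one, neg_mul, mul_inv_cancel₀ hr0]
    rw [hd1'] at hd1; simp at hd1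
  -- key lemma applications
  obtain ⟨hA, hB⟩ := val_key D R hval d hd0 hd1 hdinv
  obtain ⟨hC, hD⟩ := val_key D R hval d'⁻¹ (inv_ne_zero hd'0) hd'inv1
    (by rw [inv_inv]; exact hd'n)
  -- identities relating (1+d'⁻¹)⁻¹ with (1+d')⁻¹
  have I0 : (1 : D) + d'⁻¹ = (1 + d') * d'⁻¹ := by
    rw [add_mul, one_mul, mul_inv_cancel₀ hd'0, add_comm]
  have I1 : (1 + d'⁻¹)⁻¹ = d' * (1 + d')⁻¹ := by
    rw [I0, mul_inv_rev, inv_inv]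
  have I2 : d'⁻¹ * (1 + d'⁻¹)⁻¹ = (1 + d')⁻¹ := by
    rw [I1, ← mul_assoc, inv_mul_cancel₀ hd'0, one_mul]
  -- conjugation of the two scalars
  have J2 : r⁻¹ * (1 + d)⁻¹ * r = (1 + d')⁻¹ := by
    rw [← hconj]
    simp [mul_inv_rev, inv_inv, mul_assoc]
  have J1 : r⁻¹ * (d * (1 + d)⁻¹) * r = d' * (1 + d')⁻¹ := by
    have key : r⁻¹ * (d * (1 + d)⁻¹) * r
        = (r⁻¹ * d * r) * (r⁻¹ * (1 + d)⁻¹ * r) := by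
      simp [mul_assoc, mul_inv_cancel_left₀ hr0]
    rw [key, J2, hd'def]
  -- the common element
  have hsum : d * h₂ + h₂ = (1 + d) * h₂ := by
    rw [add_mul, one_mul, add_comm]
  refine ⟨h₁ + h₂, hHadd _ hh₁ _ hh₂, ?_, ?_⟩
  · refine ⟨d * (1 + d)⁻¹, hB, by rw [J1, ← I1]; exact hC, ?_⟩
    rw [hde, hsum, mul_assoc, ← mul_assoc (1 + d)⁻¹, inv_mul_cancel₀ hd1, one_mul]
  · refine ⟨(1 + d)⁻¹, hA, by rw [J2, ← I2]; exact hD, ?_⟩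
    rw [hde, hsum, ← mul_assoc, inv_mul_cancel₀ hd1, one_mul]

/-- Let `R` be a valuation ring inside a division ring `D`, `0 ≠ r ∈ R`, and
`S' = R ∩ rRr⁻¹`.  Any two elements of a left `S'`-submodule `H` of `R` lie in a common
cyclic submodule `S'·h` with `h ∈ H`. -/
theorem valuation_idealizer_locally_cyclic (D : Type*) [DivisionRing D] (R : Subring D)
    (hval : ∀ d : D, d ≠ 0 → d ∈ R ∨ d⁻¹ ∈ R)
    (r : D) (hr : r ∈ R) (hr0 : r ≠ 0)
    (H : Set D)
    (hHR : H ⊆ (R : Set D))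
    (hH0 : (0 : D) ∈ H)
    (hHadd : ∀ x ∈ H, ∀ y ∈ H, x + y ∈ H)
    (hHneg : ∀ x ∈ H, -x ∈ H)
    (hHsmul : ∀ s : D, s ∈ R → r⁻¹ * s * r ∈ R → ∀ x ∈ H, s * x ∈ H)
    (h₁ h₂ : D) (hh₁ : h₁ ∈ H) (hh₂ : h₂ ∈ H) :
    ∃ h ∈ H, (∃ s₁ : D, s₁ ∈ R ∧ r⁻¹ * s₁ * r ∈ R ∧ h₁ = s₁ * h) ∧
      (∃ s₂ : D, s₂ ∈ R ∧ r⁻¹ * s₂ * r ∈ R ∧ h₂ = s₂ * h) := by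
  have hone : r⁻¹ * (1 : D) * r ∈ R := by
    rw [mul_one, inv_mul_cancel₀ hr0]; exact R.one_mem
  have hzero : r⁻¹ * (0 : D) * r ∈ R := by
    rw [mul_zero, zero_mul]; exact R.zero_mem
  by_cases h10 : h₁ = 0
  · exact ⟨h₂, hh₂, ⟨0, R.zero_mem, hzero, by simp [h10]⟩,
      ⟨1, R.one_mem, hone, by simp⟩⟩
  by_cases h20 : h₂ = 0
  · exact ⟨h₁, hh₁, ⟨1, R.one_mem, hone, by simp⟩,
      ⟨0, R.zero_mem, hzero, by simp [h20]⟩⟩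
  set d : D := h₁ * h₂⁻¹ with hddef
  have hd0 : d ≠ 0 := mul_ne_zero h10 (inv_ne_zero h20)
  have hde : h₁ = d * h₂ := by
    rw [hddef, mul_assoc, inv_mul_cancel₀ h20, mul_one]
  set d' : D := r⁻¹ * d * r with hd'def
  have hd'0 : d' ≠ 0 :=
    mul_ne_zero (mul_ne_zero (inv_ne_zero hr0) hd0) hr0
  have hinvconj : r⁻¹ * d⁻¹ * r = d'⁻¹ := by
    simp only [hd'def, mul_inv_rev, inv_inv, mul_assoc]
  have hde2 : h₂ = d⁻¹ * h₁ := by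
    rw [hde, ← mul_assoc, inv_mul_cancel₀ hd0, one_mul]
  by_cases hA : d ∈ R ∧ d' ∈ R
  · exact ⟨h₂, hh₂, ⟨d, hA.1, hA.2, hde⟩, ⟨1, R.one_mem, hone, by simp⟩⟩
  by_cases hB : d⁻¹ ∈ R ∧ d'⁻¹ ∈ R
  · exact ⟨h₁, hh₁, ⟨1, R.one_mem, hone, by simp⟩,
      ⟨d⁻¹, hB.1, by rw [hinvconj]; exact hB.2, hde2⟩⟩
  have hd1 : 1 + d ≠ 0 := by
    intro h
    have hdn1 : d = -1 := eq_neg_of_add_eq_zero_right h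
    have hd'n1 : d' = -1 := by
      rw [hd'def, hdn1, mul_neg, mul_one, neg_mul, inv_mul_cancel₀ hr0]
    exact hA ⟨hdn1 ▸ R.neg_mem R.one_mem, hd'n1 ▸ R.neg_mem R.one_mem⟩
  by_cases hdi : d⁻¹ ∈ R
  · -- then d'⁻¹ ∉ R, hence d' ∈ R, hence d ∉ R: swapped case
    have hd'in : d'⁻¹ ∉ R := fun h => hB ⟨hdi, h⟩
    have hd'R : d' ∈ R := (hval d' hd'0).resolve_right hd'in
    have hdn : d ∉ R := fun h => hA ⟨h, hd'R⟩
    have hd1' : (1 : D) + d⁻¹ ≠ 0 := by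
      intro h
      have h2 : d⁻¹ = -1 := eq_neg_of_add_eq_zero_right h
      have h3 : d = -1 := inv_injective (by rw [h2, inv_neg, inv_one])
      rw [h3] at hd1; simp at hd1
    obtain ⟨h, hh, P2, P1⟩ := val_aux D R hval r hr0 H hHadd h₂ h₁ hh₂ hh₁
      d⁻¹ (inv_ne_zero hd0) hd1' (by rw [inv_inv]; exact hdn)
      (by rw [hinvconj]; exact hd'in) hde2
    exact ⟨h, hh, P1, P2⟩
  · have hdR : d ∈ R := (hval d hd0).resolve_right hdi
    have hd'n : d' ∉ R := fun h => hA ⟨hdR, h⟩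
    exact val_aux D R hval r hr0 H hHadd h₁ h₂ hh₁ hh₂ d hd0 hd1 hdi hd'n hde
end

section
/- Let R be a valuation domain inside a division ring D, fix 0 ≠ r ∈ R, and set S' = R ∩ rRr⁻¹. Then for every left ideal I of S', I = R·I ∩ (rRr⁻¹)·I, where R·I and (rRr⁻¹)·I are computed inside D. Consequently, if I and J are left ideals of S' with R·I = R·J and (rRr⁻¹)·I = (rRr⁻¹)·J, then I = J. -/
private lemma vii_closure_form {D : Type*} [DivisionRing D] (V : Set D)
    (hvalV : ∀ d : D, d ≠ 0 → d ∈ V ∨ d⁻¹ ∈ V)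
    (h0 : (0 : D) ∈ V)
    (haddV : ∀ x ∈ V, ∀ y ∈ V, x + y ∈ V)
    (hnegV : ∀ x ∈ V, -x ∈ V)
    (hmulV : ∀ x ∈ V, ∀ y ∈ V, x * y ∈ V)
    (I : Set D) (hI0 : (0 : D) ∈ I) (x : D) :
    x ∈ AddSubgroup.closure {x : D | ∃ a ∈ V, ∃ i ∈ I, x = a * i} ↔
      ∃ a ∈ V, ∃ i ∈ I, x = a * i := by
  have hGadd : ∀ p ∈ {x : D | ∃ a ∈ V, ∃ i ∈ I, x = a * i},
      ∀ q ∈ {x : D | ∃ a ∈ V, ∃ i ∈ I, x = a * i},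
      p + q ∈ {x : D | ∃ a ∈ V, ∃ i ∈ I, x = a * i} := by
    rintro p ⟨a, ha, i, hi, rfl⟩ q ⟨b, hb, k, hk, rfl⟩
    by_cases hp : a * i = 0
    · rw [hp, zero_add]; exact ⟨b, hb, k, hk, rfl⟩
    by_cases hq : b * k = 0
    · rw [hq, add_zero]; exact ⟨a, ha, i, hi, rfl⟩
    rcases hvalV ((a * i) * (b * k)⁻¹) (mul_ne_zero hp (inv_ne_zero hq)) with h | h
    · refine ⟨(a * i) * (b * k)⁻¹ * b + b, haddV _ (hmulV _ h _ hb) _ hb, k, hk, ?_⟩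
      have e : (a * i) * (b * k)⁻¹ * (b * k) = a * i := by
        rw [mul_assoc, inv_mul_cancel₀ hq, mul_one]
      rw [add_mul, mul_assoc ((a * i) * (b * k)⁻¹) b k, e]
    · rw [mul_inv_rev, inv_inv] at h
      refine ⟨a + (b * k) * (a * i)⁻¹ * a, haddV _ ha _ (hmulV _ h _ ha), i, hi, ?_⟩
      have e : (b * k) * (a * i)⁻¹ * (a * i) = b * k := by
        rw [mul_assoc, inv_mul_cancel₀ hp, mul_one]
      rw [add_mul, mul_assoc ((b * k) * (a * i)⁻¹) a i, e]
  let H : AddSubgroup D :=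
    { carrier := {x : D | ∃ a ∈ V, ∃ i ∈ I, x = a * i}
      add_mem' := fun ha hb => hGadd _ ha _ hb
      zero_mem' := ⟨0, h0, 0, hI0, (zero_mul 0).symm⟩
      neg_mem' := by rintro y ⟨a, ha, i, hi, rfl⟩; exact ⟨-a, hnegV _ ha, i, hi, (neg_mul a i).symm⟩ }
  have : AddSubgroup.closure {x : D | ∃ a ∈ V, ∃ i ∈ I, x = a * i} = H :=
    AddSubgroup.closure_eq H
  rw [this]
  exact Iff.rfl

private lemma vii_val_unit {D : Type*} [DivisionRing D] (V : Set D)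
    (hvalV : ∀ d : D, d ≠ 0 → d ∈ V ∨ d⁻¹ ∈ V)
    (h1 : (1 : D) ∈ V) (hsub : ∀ x ∈ V, ∀ y ∈ V, x - y ∈ V)
    (t : D) (ht0 : t ≠ 0) (htinv : t⁻¹ ∉ V) (htm : t ≠ -1) :
    (1 + t)⁻¹ ∈ V := by
  have hne : (1 : D) + t ≠ 0 := by
    intro h
    exact htm (neg_eq_of_add_eq_zero_right h).symm
  have e1 : t⁻¹ + 1 = t⁻¹ * (1 + t) := by
    rw [mul_add, mul_one, inv_mul_cancel₀ ht0]
  have hu0 : t⁻¹ + 1 ≠ 0 := by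
    rw [e1]; exact mul_ne_zero (inv_ne_zero ht0) hne
  have hu : (t⁻¹ + 1)⁻¹ ∈ V := by
    rcases hvalV _ hu0 with h | h
    · exact absurd (by simpa using hsub _ h _ h1) htinv
    · exact h
  have e2 : (t⁻¹ + 1)⁻¹ = (1 + t)⁻¹ * t := by
    rw [e1, mul_inv_rev, inv_inv]
  have e3 : (1 + t)⁻¹ * t = 1 - (1 + t)⁻¹ := by
    have h4 : (1 + t)⁻¹ * t = (1 + t)⁻¹ * ((1 + t) - 1) := by rw [add_sub_cancel_left]
    rw [h4, mul_sub, inv_mul_cancel₀ hne, mul_one]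
  have := hsub _ h1 _ hu
  rw [e2, e3] at this
  simpa using this

private lemma vii_main {D : Type*} [DivisionRing D] (V W : Set D)
    (hvalV : ∀ d : D, d ≠ 0 → d ∈ V ∨ d⁻¹ ∈ V)
    (h0V : (0 : D) ∈ V) (h1V : (1 : D) ∈ V)
    (haddV : ∀ x ∈ V, ∀ y ∈ V, x + y ∈ V)
    (hnegV : ∀ x ∈ V, -x ∈ V)
    (hmulV : ∀ x ∈ V, ∀ y ∈ V, x * y ∈ V)
    (hvalW : ∀ d : D, d ≠ 0 → d ∈ W ∨ d⁻¹ ∈ W)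
    (h0W : (0 : D) ∈ W) (h1W : (1 : D) ∈ W)
    (haddW : ∀ x ∈ W, ∀ y ∈ W, x + y ∈ W)
    (hnegW : ∀ x ∈ W, -x ∈ W)
    (hmulW : ∀ x ∈ W, ∀ y ∈ W, x * y ∈ W)
    (I : Set D) (hIV : I ⊆ V) (hIW : I ⊆ W) (hI0 : (0 : D) ∈ I)
    (hIadd : ∀ x ∈ I, ∀ y ∈ I, x + y ∈ I)
    (hIsmul : ∀ s : D, s ∈ V → s ∈ W → ∀ x ∈ I, s * x ∈ I) :
    I = ↑(AddSubgroup.closure {x : D | ∃ a ∈ V, ∃ i ∈ I, x = a * i}) ∩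
        ↑(AddSubgroup.closure {x : D | ∃ a ∈ W, ∃ i ∈ I, x = a * i}) := by
  have hsubV : ∀ x ∈ V, ∀ y ∈ V, x - y ∈ V := fun x hx y hy => by
    rw [sub_eq_add_neg]; exact haddV _ hx _ (hnegV _ hy)
  have hsubW : ∀ x ∈ W, ∀ y ∈ W, x - y ∈ W := fun x hx y hy => by
    rw [sub_eq_add_neg]; exact haddW _ hx _ (hnegW _ hy)
  ext x
  constructor
  · intro hx
    exact ⟨AddSubgroup.subset_closure ⟨1, h1V, x, hx, (one_mul x).symm⟩,
           AddSubgroup.subset_closure ⟨1, h1W, x, hx, (one_mul x).symm⟩⟩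
  · rintro ⟨hx1, hx2⟩
    obtain ⟨a, ha, i, hi, rfl⟩ :=
      (vii_closure_form V hvalV h0V haddV hnegV hmulV I hI0 x).1 hx1
    obtain ⟨c, hc, j, hj, hcj⟩ :=
      (vii_closure_form W hvalW h0W haddW hnegW hmulW I hI0 _).1 hx2
    by_cases hx0 : a * i = 0
    · rw [hx0]; exact hI0
    have ha0 : a ≠ 0 := left_ne_zero_of_mul hx0
    have hc0 : c ≠ 0 := left_ne_zero_of_mul (hcj ▸ hx0)
    by_cases haW : a ∈ W
    · exact hIsmul a ha haW i hi
    by_cases hcV : c ∈ V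
    · rw [hcj]; exact hIsmul c hcV hc j hj
    have hainv : a⁻¹ ∈ W := (hvalW a ha0).resolve_left haW
    have hcinv : c⁻¹ ∈ V := (hvalV c hc0).resolve_left hcV
    set t : D := c⁻¹ * a with htdef
    have htV : t ∈ V := hmulV _ hcinv _ ha
    have ht0 : t ≠ 0 := mul_ne_zero (inv_ne_zero hc0) ha0
    have htinv : t⁻¹ = a⁻¹ * c := by rw [htdef, mul_inv_rev, inv_inv]
    have htiW : t⁻¹ ∈ W := by rw [htinv]; exact hmulW _ hainv _ hc
    have hct : c * t = a := by rw [htdef, ← mul_assoc, mul_inv_cancel₀ hc0, one_mul]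
    have hat : a * t⁻¹ = c := by rw [htinv, ← mul_assoc, mul_inv_cancel₀ ha0, one_mul]
    have htiV : t⁻¹ ∉ V := fun h => hcV (hat ▸ hmulV _ ha _ h)
    have htW : t ∉ W := fun h => haW (hct ▸ hmulW _ hc _ h)
    have htm : t ≠ -1 := by
      intro h
      apply hcV
      have : c = -a := by rw [h, mul_neg_one] at hct; rw [← hct, neg_neg]
      rw [this]; exact hnegV _ ha
    have hne : (1 : D) + t ≠ 0 := by
      intro h; exact htm (neg_eq_of_add_eq_zero_right h).symm
    have h1t : (1 + t)⁻¹ ∈ V := vii_val_unit V hvalV h1V hsubV t ht0 htiV htm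
    have htm' : t⁻¹ ≠ -1 := by
      intro h
      apply htm
      rw [← inv_inv t, h, inv_neg, inv_one]
    have h2t : (1 + t⁻¹)⁻¹ ∈ W :=
      vii_val_unit W hvalW h1W hsubW t⁻¹ (inv_ne_zero ht0)
        (by rw [inv_inv]; exact htW) htm'
    -- the common factor s = a (1+t)⁻¹ = c (1+t⁻¹)⁻¹
    have e3 : (1 + t)⁻¹ * t = 1 - (1 + t)⁻¹ := by
      have h4 : (1 + t)⁻¹ * t = (1 + t)⁻¹ * ((1 + t) - 1) := by rw [add_sub_cancel_left]
      rw [h4, mul_sub, inv_mul_cancel₀ hne, mul_one]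
    have e4 : t * (1 + t)⁻¹ = 1 - (1 + t)⁻¹ := by
      have h4 : t * (1 + t)⁻¹ = ((1 + t) - 1) * (1 + t)⁻¹ := by rw [add_sub_cancel_left]
      rw [h4, sub_mul, mul_inv_cancel₀ hne, one_mul]
    have hid : a * (1 + t)⁻¹ = c * (1 + t⁻¹)⁻¹ := by
      have e1 : (1 : D) + t⁻¹ = t⁻¹ * (1 + t) := by
        rw [mul_add, mul_one, inv_mul_cancel₀ ht0, add_comm]
      rw [e1, mul_inv_rev, inv_inv, ← hct, mul_assoc, e4, ← e3]
    have hsV : a * (1 + t)⁻¹ ∈ V := hmulV _ ha _ h1t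
    have hsW : a * (1 + t)⁻¹ ∈ W := by rw [hid]; exact hmulW _ hc _ h2t
    have hji : j = t * i := by
      rw [htdef, mul_assoc, hcj, ← mul_assoc, inv_mul_cancel₀ hc0, one_mul]
    have hk : i + j = (1 + t) * i := by rw [hji, add_mul, one_mul]
    have final : a * i = (a * (1 + t)⁻¹) * (i + j) := by
      rw [hk, mul_assoc, ← mul_assoc (1 + t)⁻¹, inv_mul_cancel₀ hne, one_mul]
    rw [final]
    exact hIsmul _ hsV hsW _ (hIadd i hi j hj)

/-- Let `R` be a valuation ring inside a division ring `D`, `0 ≠ r ∈ R`, and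
`S' = R ∩ rRr⁻¹`.  Every left ideal `I` of `S'` satisfies `I = R·I ∩ (rRr⁻¹)·I`
(computed inside `D`); consequently left ideals with equal extensions to `R` and to
`rRr⁻¹` are equal. -/
theorem valuation_idealizer_ideal_eq_inter (D : Type*) [DivisionRing D] (R : Subring D)
    (hval : ∀ d : D, d ≠ 0 → d ∈ R ∨ d⁻¹ ∈ R)
    (r : D) (hr : r ∈ R) (hr0 : r ≠ 0)
    -- `S'` and the conjugate ring `rRr⁻¹` as subsets of `D`
    (S' : Set D) (hS' : S' = {x : D | x ∈ R ∧ r⁻¹ * x * r ∈ R})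
    (C : Set D) (hC : C = {x : D | r⁻¹ * x * r ∈ R})
    -- `I` and `J` are left ideals of `S'`
    (I J : Set D)
    (hIS' : I ⊆ S') (hI0 : (0 : D) ∈ I)
    (hIadd : ∀ x ∈ I, ∀ y ∈ I, x + y ∈ I) (hIneg : ∀ x ∈ I, -x ∈ I)
    (hIsmul : ∀ s ∈ S', ∀ x ∈ I, s * x ∈ I)
    (hJS' : J ⊆ S') (hJ0 : (0 : D) ∈ J)
    (hJadd : ∀ x ∈ J, ∀ y ∈ J, x + y ∈ J) (hJneg : ∀ x ∈ J, -x ∈ J)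
    (hJsmul : ∀ s ∈ S', ∀ x ∈ J, s * x ∈ J) :
    I = ↑(AddSubgroup.closure {x : D | ∃ a ∈ (R : Set D), ∃ i ∈ I, x = a * i}) ∩
        ↑(AddSubgroup.closure {x : D | ∃ a ∈ C, ∃ i ∈ I, x = a * i}) ∧
    ((AddSubgroup.closure {x : D | ∃ a ∈ (R : Set D), ∃ i ∈ I, x = a * i} =
        AddSubgroup.closure {x : D | ∃ a ∈ (R : Set D), ∃ j ∈ J, x = a * j}) →
      (AddSubgroup.closure {x : D | ∃ a ∈ C, ∃ i ∈ I, x = a * i} =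
        AddSubgroup.closure {x : D | ∃ a ∈ C, ∃ j ∈ J, x = a * j}) →
      I = J) := by
  -- membership in C
  have hmemC : ∀ x : D, x ∈ C ↔ r⁻¹ * x * r ∈ R := by
    intro x; rw [hC]; exact Iff.rfl
  have conj_inv : ∀ d : D, (r⁻¹ * d * r)⁻¹ = r⁻¹ * d⁻¹ * r := by
    intro d
    rw [mul_inv_rev, mul_inv_rev, inv_inv, mul_assoc]
  -- properties of V := (R : Set D)
  have hvalV : ∀ d : D, d ≠ 0 → d ∈ (R : Set D) ∨ d⁻¹ ∈ (R : Set D) := hval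
  have h0V : (0 : D) ∈ (R : Set D) := R.zero_mem
  have h1V : (1 : D) ∈ (R : Set D) := R.one_mem
  have haddV : ∀ x ∈ (R : Set D), ∀ y ∈ (R : Set D), x + y ∈ (R : Set D) :=
    fun x hx y hy => R.add_mem hx hy
  have hnegV : ∀ x ∈ (R : Set D), -x ∈ (R : Set D) := fun x hx => R.neg_mem hx
  have hmulV : ∀ x ∈ (R : Set D), ∀ y ∈ (R : Set D), x * y ∈ (R : Set D) :=
    fun x hx y hy => R.mul_mem hx hy
  -- properties of W := C
  have hvalW : ∀ d : D, d ≠ 0 → d ∈ C ∨ d⁻¹ ∈ C := by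
    intro d hd
    have he0 : r⁻¹ * d * r ≠ 0 :=
      mul_ne_zero (mul_ne_zero (inv_ne_zero hr0) hd) hr0
    rcases hval _ he0 with h | h
    · left; exact (hmemC d).2 h
    · right; rw [conj_inv] at h; exact (hmemC d⁻¹).2 h
  have h0W : (0 : D) ∈ C := (hmemC 0).2 (by simpa using R.zero_mem)
  have h1W : (1 : D) ∈ C := (hmemC 1).2 (by
    rw [mul_one, inv_mul_cancel₀ hr0]; exact R.one_mem)
  have haddW : ∀ x ∈ C, ∀ y ∈ C, x + y ∈ C := by
    intro x hx y hy
    refine (hmemC _).2 ?_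
    have : r⁻¹ * (x + y) * r = r⁻¹ * x * r + r⁻¹ * y * r := by
      rw [mul_add, add_mul]
    rw [this]
    exact R.add_mem ((hmemC x).1 hx) ((hmemC y).1 hy)
  have hnegW : ∀ x ∈ C, -x ∈ C := by
    intro x hx
    refine (hmemC _).2 ?_
    have : r⁻¹ * (-x) * r = -(r⁻¹ * x * r) := by
      rw [mul_neg, neg_mul]
    rw [this]
    exact R.neg_mem ((hmemC x).1 hx)
  have hmulW : ∀ x ∈ C, ∀ y ∈ C, x * y ∈ C := by
    intro x hx y hy
    refine (hmemC _).2 ?_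
    have : r⁻¹ * (x * y) * r = (r⁻¹ * x * r) * (r⁻¹ * y * r) := by
      simp only [mul_assoc, inv_mul_cancel_left₀ hr0, mul_inv_cancel_left₀ hr0]
    rw [this]
    exact R.mul_mem ((hmemC x).1 hx) ((hmemC y).1 hy)
  -- S' membership
  have hmemS' : ∀ x : D, x ∈ S' ↔ x ∈ (R : Set D) ∧ x ∈ C := by
    intro x; rw [hS', hmemC]; exact Iff.rfl
  have hIV : I ⊆ (R : Set D) := fun x hx => ((hmemS' x).1 (hIS' hx)).1
  have hIW : I ⊆ C := fun x hx => ((hmemS' x).1 (hIS' hx)).2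
  have hJV : J ⊆ (R : Set D) := fun x hx => ((hmemS' x).1 (hJS' hx)).1
  have hJW : J ⊆ C := fun x hx => ((hmemS' x).1 (hJS' hx)).2
  have hIsmul' : ∀ s : D, s ∈ (R : Set D) → s ∈ C → ∀ x ∈ I, s * x ∈ I :=
    fun s hs1 hs2 x hx => hIsmul s ((hmemS' s).2 ⟨hs1, hs2⟩) x hx
  have hJsmul' : ∀ s : D, s ∈ (R : Set D) → s ∈ C → ∀ x ∈ J, s * x ∈ J :=
    fun s hs1 hs2 x hx => hJsmul s ((hmemS' s).2 ⟨hs1, hs2⟩) x hx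
  have keyI := vii_main (R : Set D) C hvalV h0V h1V haddV hnegV hmulV
    hvalW h0W h1W haddW hnegW hmulW I hIV hIW hI0 hIadd hIsmul'
  have keyJ := vii_main (R : Set D) C hvalV h0V h1V haddV hnegV hmulV
    hvalW h0W h1W haddW hnegW hmulW J hJV hJW hJ0 hJadd hJsmul'
  refine ⟨keyI, fun h1 h2 => ?_⟩
  rw [keyI, keyJ, h1, h2]
end
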